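/- Let $w \in \mathbb{R}^D$, let $\{v^1, \ldots, v^d\}$ be pairwise orthogonal vectors with $\|v^i\|_2 = L$, and $\mathcal{HC} = \{w + \sum_{i=1}^d f_i v^i : f_i \in [0,1]\}$. Let $e = v^1/L$, let $z$ be a unit vector with $z \cdot e \ge \cos\theta$ for some $0 < \theta < \pi/2$, and let $0 < \beta < 1$. Set $m = \min_{y \in \mathcal{HC}} y \cdot z$, $M = \max_{y \in \mathcal{HC}} y \cdot z$, and $\mathcal{HC}_l = \{y \in \mathcal{HC} : z \cdot y \le m + \beta(M - m)\}$. Then with $\epsilon = 8 \sin(\theta/2)\sqrt{d}$: $\max_{y \in \mathcal{HC}_l} e \cdot y - \min_{y \in \mathcal{HC}_l} e \cdot y \le L(\beta + \epsilon)$. -/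

import Mathlib

/-!
Write the cube as `{w + ∑ fᵢ • L • uᵢ : f ∈ [0,1]ᵈ}` with `u` orthonormal and `e = u₀`, and put
`cᵢ = ⟪L • uᵢ, z⟫`. Then `⟪y, z⟫ = ⟪w, z⟫ + ∑ fᵢ cᵢ`, so `m = ⟪w, z⟫ + ∑ min cᵢ 0` and
`M - m = ∑ |cᵢ|`. Every coordinate contributes a nonnegative amount `fᵢ cᵢ - min cᵢ 0` to the
excess over `m`, so a point of the lower piece satisfies `f₀ c₀ ≤ β (c₀ + ∑_{i ≠ 0} |cᵢ|)`. Now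
`c₀ = L ⟪z, e⟫ ≈ L`, while Bessel's and the Cauchy–Schwarz inequality give
`∑_{i ≠ 0} |cᵢ| ≤ L √d ‖z - e‖ ≤ 2 L √d sin (θ / 2)`. Hence `f₀ ≤ β + 8 √d sin (θ / 2)`, and
`⟪e, y⟫ = ⟪e, w⟫ + L f₀`.
-/

open scoped RealInnerProductSpace
open Finset

section UnitCube

variable {ι : Type*} [Fintype ι]

lemma min_le_mul_of_mem_Icc {x : ℝ} (hx : x ∈ Set.Icc (0 : ℝ) 1) (c : ℝ) : min c 0 ≤ x * c := by
  rcases le_total 0 c with hc | hc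
  · rw [min_eq_right hc]; exact mul_nonneg hx.1 hc
  · rw [min_eq_left hc]; nlinarith [hx.2]

lemma mul_le_max_of_mem_Icc {x : ℝ} (hx : x ∈ Set.Icc (0 : ℝ) 1) (c : ℝ) : x * c ≤ max c 0 := by
  rcases le_total 0 c with hc | hc
  · rw [max_eq_left hc]; nlinarith [hx.2]
  · rw [max_eq_right hc]; exact mul_nonpos_of_nonneg_of_nonpos hx.1 hc

lemma isLeast_affine_image_Icc (a : ℝ) (c : ι → ℝ) :
    IsLeast ((fun f : ι → ℝ => a + ∑ i, f i * c i) '' Set.Icc 0 1) (a + ∑ i, min (c i) 0) := by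
  classical
  refine ⟨⟨fun i => if c i < 0 then 1 else 0, ⟨fun i => ?_, fun i => ?_⟩, ?_⟩, ?_⟩
  · dsimp only; split_ifs <;> norm_num
  · dsimp only; split_ifs <;> norm_num
  · refine congrArg (a + ·) (sum_congr rfl fun i _ => ?_)
    dsimp only
    split_ifs with h
    · rw [one_mul, min_eq_left h.le]
    · rw [zero_mul, min_eq_right (not_lt.mp h)]
  · rintro _ ⟨f, hf, rfl⟩
    exact add_le_add_right
      (sum_le_sum fun i _ => min_le_mul_of_mem_Icc ⟨hf.1 i, hf.2 i⟩ (c i)) a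

lemma isGreatest_affine_image_Icc (a : ℝ) (c : ι → ℝ) :
    IsGreatest ((fun f : ι → ℝ => a + ∑ i, f i * c i) '' Set.Icc 0 1) (a + ∑ i, max (c i) 0) := by
  classical
  refine ⟨⟨fun i => if 0 < c i then 1 else 0, ⟨fun i => ?_, fun i => ?_⟩, ?_⟩, ?_⟩
  · dsimp only; split_ifs <;> norm_num
  · dsimp only; split_ifs <;> norm_num
  · refine congrArg (a + ·) (sum_congr rfl fun i _ => ?_)
    dsimp only
    split_ifs with h
    · rw [one_mul, max_eq_left h.le]
    · rw [zero_mul, max_eq_right (not_lt.mp h)]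
  · rintro _ ⟨f, hf, rfl⟩
    exact add_le_add_right
      (sum_le_sum fun i _ => mul_le_max_of_mem_Icc ⟨hf.1 i, hf.2 i⟩ (c i)) a

lemma mul_sub_min_le_of_sum_mul_le {c f : ι → ℝ} (hf : f ∈ Set.Icc 0 1) {b : ℝ}
    (h : ∑ j, f j * c j ≤ ∑ j, min (c j) 0 + b) (i : ι) : f i * c i - min (c i) 0 ≤ b := by
  have hexcess : ∀ j ∈ univ, 0 ≤ f j * c j - min (c j) 0 := fun j _ =>
    sub_nonneg.2 (min_le_mul_of_mem_Icc ⟨hf.1 j, hf.2 j⟩ (c j))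
  calc f i * c i - min (c i) 0 ≤ ∑ j, (f j * c j - min (c j) 0) :=
        single_le_sum hexcess (mem_univ i)
    _ ≤ b := by rw [sum_sub_distrib]; linarith

end UnitCube

/-- Trivial if `4 t ≥ 1`, as `x ≤ 1`; otherwise `a ≥ 31 / 32`, and `32 / 31 ≤ 4` absorbs the rest. -/
lemma le_add_four_mul_of_mul_sub_min_le {x β L a r t S : ℝ} (hx : x ≤ 1) (hβ : 0 ≤ β)
    (hL : 0 < L) (hr : 0 ≤ r) (hrt : r ≤ t) (ha : 1 - r ^ 2 / 2 ≤ a) (hS : S ≤ L * t)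
    (h : x * (L * a) - min (L * a) 0 ≤ β * (|L * a| + S)) : x ≤ β + 4 * t := by
  rcases le_or_gt 1 (4 * t) with ht | ht
  · linarith
  have ha' : 31 / 32 ≤ a := by nlinarith
  have hLa : 0 < L * a := by positivity
  rw [min_eq_right hLa.le, abs_of_pos hLa, sub_zero] at h
  rcases le_or_gt x β with hxβ | hxβ
  · linarith
  have hβS : β * S ≤ L * t := by
    rcases le_total 0 S with hS₀ | hS₀
    · nlinarith
    · nlinarith [mul_nonneg hL.le (hr.trans hrt)]
  have : (x - β) * a ≤ t := le_of_mul_le_mul_left (by linarith) hL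
  nlinarith

lemma csSup_image_sub_csInf_image_le {α : Type*} {S : Set α} (hS : S.Nonempty) {g : α → ℝ}
    {a b : ℝ} (h : ∀ y ∈ S, g y ∈ Set.Icc a (a + b)) : sSup (g '' S) - sInf (g '' S) ≤ b := by
  have hne : (g '' S).Nonempty := hS.image g
  have hsup : sSup (g '' S) ≤ a + b := csSup_le hne (by rintro _ ⟨y, hy, rfl⟩; exact (h y hy).2)
  have hinf : a ≤ sInf (g '' S) := le_csInf hne (by rintro _ ⟨y, hy, rfl⟩; exact (h y hy).1)
  linarith

section InnerProductSpace

variable {ι E : Type*} [NormedAddCommGroup E] [InnerProductSpace ℝ E]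

lemma exists_orthonormal_of_orthogonal_of_norm_eq {v : ι → E} {L : ℝ} (hL : 0 < L)
    (horth : Pairwise fun i j => ⟪v i, v j⟫ = 0) (hlen : ∀ i, ‖v i‖ = L) :
    ∃ u : ι → E, Orthonormal ℝ u ∧ v = fun i => L • u i := by
  refine ⟨fun i => L⁻¹ • v i, ⟨fun i => ?_, fun i j hij => ?_⟩, ?_⟩
  · rw [norm_smul, hlen, norm_inv, Real.norm_of_nonneg hL.le, inv_mul_cancel₀ hL.ne']
  · simp only [real_inner_smul_left, real_inner_smul_right, horth hij, mul_zero]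
  · funext i
    rw [smul_smul, mul_inv_cancel₀ hL.ne', one_smul]

lemma sum_abs_inner_le_sqrt_card_mul_norm {u : ι → E} (hu : Orthonormal ℝ u) (s : Finset ι)
    (x : E) : ∑ i ∈ s, |⟪u i, x⟫| ≤ √(#s) * ‖x‖ := by
  rw [← Real.sqrt_sq (norm_nonneg x), ← Real.sqrt_mul (Nat.cast_nonneg _)]
  refine Real.le_sqrt_of_sq_le ?_
  calc (∑ i ∈ s, |⟪u i, x⟫|) ^ 2 ≤ #s * ∑ i ∈ s, |⟪u i, x⟫| ^ 2 := sq_sum_le_card_mul_sum_sq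
    _ ≤ #s * ‖x‖ ^ 2 := by
      gcongr
      simpa only [Real.norm_eq_abs] using hu.sum_inner_products_le x

lemma sum_abs_inner_erase_le [Fintype ι] [DecidableEq ι] {u : ι → E} (hu : Orthonormal ℝ u)
    (i₀ : ι) (z : E) :
    ∑ i ∈ univ.erase i₀, |⟪u i, z⟫| ≤ √(Fintype.card ι) * ‖z - u i₀‖ := by
  have hshift : ∀ i ∈ univ.erase i₀, ⟪u i, z⟫ = ⟪u i, z - u i₀⟫ := fun i hi => by
    rw [inner_sub_right, hu.2 (ne_of_mem_erase hi), sub_zero]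
  rw [sum_congr rfl fun i hi => congrArg abs (hshift i hi)]
  refine (sum_abs_inner_le_sqrt_card_mul_norm hu _ _).trans ?_
  gcongr
  exact_mod_cast card_le_univ _

lemma inner_eq_one_sub_norm_sub_sq_div_two {z e : E} (hz : ‖z‖ = 1) (he : ‖e‖ = 1) :
    ⟪z, e⟫ = 1 - ‖z - e‖ ^ 2 / 2 := by
  rw [norm_sub_sq_real, hz, he]; ring

lemma norm_sub_le_two_mul_sin_half {z e : E} (hz : ‖z‖ = 1) (he : ‖e‖ = 1) {θ : ℝ}
    (hθ₀ : 0 ≤ θ) (hθ : θ ≤ 2 * Real.pi) (hangle : Real.cos θ ≤ ⟪z, e⟫) :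
    ‖z - e‖ ≤ 2 * Real.sin (θ / 2) := by
  have hsin : 0 ≤ Real.sin (θ / 2) :=
    Real.sin_nonneg_of_nonneg_of_le_pi (by linarith) (by linarith)
  refine (pow_le_pow_iff_left₀ (norm_nonneg _) (by positivity) two_ne_zero).1 ?_
  rw [inner_eq_one_sub_norm_sub_sq_div_two hz he] at hangle
  rw [mul_pow, Real.sin_sq_eq_half_sub, mul_div_cancel₀ θ two_ne_zero]
  linarith

variable [Fintype ι]

lemma inner_add_sum_smul (w : E) (v : ι → E) (f : ι → ℝ) (z : E) :
    ⟪w + ∑ i, f i • v i, z⟫ = ⟪w, z⟫ + ∑ i, f i * ⟪v i, z⟫ := by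
  simp only [inner_add_left, sum_inner, real_inner_smul_left]

lemma inner_add_sum_smul_orthonormal [DecidableEq ι] {u : ι → E} (hu : Orthonormal ℝ u)
    (w : E) (L : ℝ) (f : ι → ℝ) (i₀ : ι) :
    ⟪w + ∑ i, f i • L • u i, u i₀⟫ = ⟪w, u i₀⟫ + L * f i₀ := by
  simp only [inner_add_sum_smul, real_inner_smul_left, orthonormal_iff_ite.1 hu, mul_ite,
    mul_one, mul_zero, sum_ite_eq', mem_univ, if_true, mul_comm (f i₀)]

def cube (w : E) (v : ι → E) : Set E :=
  (fun f : ι → ℝ => w + ∑ i, f i • v i) '' Set.Icc 0 1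

def lowerCut (S : Set E) (z : E) (β : ℝ) : Set E :=
  {y ∈ S | ⟪z, y⟫ ≤ sInf ((fun y => ⟪y, z⟫) '' S) +
    β * (sSup ((fun y => ⟪y, z⟫) '' S) - sInf ((fun y => ⟪y, z⟫) '' S))}

lemma image_inner_cube (w : E) (v : ι → E) (z : E) :
    (fun y => ⟪y, z⟫) '' cube w v
      = (fun f : ι → ℝ => ⟪w, z⟫ + ∑ i, f i * ⟪v i, z⟫) '' Set.Icc 0 1 := by
  rw [cube, Set.image_image]
  simp only [inner_add_sum_smul]

lemma isLeast_inner_cube (w : E) (v : ι → E) (z : E) :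
    IsLeast ((fun y => ⟪y, z⟫) '' cube w v) (⟪w, z⟫ + ∑ i, min ⟪v i, z⟫ 0) := by
  rw [image_inner_cube]; exact isLeast_affine_image_Icc _ _

lemma isGreatest_inner_cube (w : E) (v : ι → E) (z : E) :
    IsGreatest ((fun y => ⟪y, z⟫) '' cube w v) (⟪w, z⟫ + ∑ i, max ⟪v i, z⟫ 0) := by
  rw [image_inner_cube]; exact isGreatest_affine_image_Icc _ _

lemma lowerCut_cube_nonempty (w : E) (v : ι → E) (z : E) {β : ℝ} (hβ : 0 ≤ β) :
    (lowerCut (cube w v) z β).Nonempty := by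
  obtain ⟨y, hy, hyz⟩ : ∃ y ∈ cube w v, ⟪y, z⟫ = _ := (isLeast_inner_cube w v z).1
  refine ⟨y, hy, ?_⟩
  rw [(isLeast_inner_cube w v z).csInf_eq, (isGreatest_inner_cube w v z).csSup_eq,
    real_inner_comm, hyz]
  have hwidth : 0 ≤ ∑ i, max ⟪v i, z⟫ 0 - ∑ i, min ⟪v i, z⟫ 0 :=
    sub_nonneg.2 (sum_le_sum fun i _ => min_le_max)
  linarith [mul_nonneg hβ hwidth]

lemma sum_mul_le_of_mem_lowerCut_cube {w : E} {v : ι → E} {z : E} {β : ℝ} {f : ι → ℝ}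
    (h : w + ∑ i, f i • v i ∈ lowerCut (cube w v) z β) :
    ∑ i, f i * ⟪v i, z⟫ ≤ ∑ i, min ⟪v i, z⟫ 0 + β * ∑ i, |⟪v i, z⟫| := by
  have hcut := h.2
  rw [(isLeast_inner_cube w v z).csInf_eq, (isGreatest_inner_cube w v z).csSup_eq,
    real_inner_comm, inner_add_sum_smul, add_sub_add_left_eq_sub, ← sum_sub_distrib]
    at hcut
  simp only [max_sub_min_eq_abs', sub_zero] at hcut
  linarith

lemma inner_mem_Icc_of_mem_lowerCut_cube [DecidableEq ι] {u : ι → E} (hu : Orthonormal ℝ u)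
    {L : ℝ} (hL : 0 < L) (w : E) {z : E} (hz : ‖z‖ = 1) {β : ℝ} (hβ : 0 ≤ β) (i₀ : ι) {y : E}
    (hy : y ∈ lowerCut (cube w fun i => L • u i) z β) :
    ⟪u i₀, y⟫ ∈ Set.Icc ⟪w, u i₀⟫
      (⟪w, u i₀⟫ + L * (β + 4 * (√(Fintype.card ι) * ‖z - u i₀‖))) := by
  obtain ⟨f, hf, rfl⟩ := hy.1
  have hexcess := mul_sub_min_le_of_sum_mul_le hf (sum_mul_le_of_mem_lowerCut_cube hy) i₀
  rw [← add_sum_erase _ _ (mem_univ i₀)] at hexcess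
  simp only [real_inner_smul_left] at hexcess
  have hoff : ∑ i ∈ univ.erase i₀, |L * ⟪u i, z⟫| ≤ L * (√(Fintype.card ι) * ‖z - u i₀‖) := by
    simp only [abs_mul, abs_of_pos hL, ← mul_sum]
    exact mul_le_mul_of_nonneg_left (sum_abs_inner_erase_le hu i₀ z) hL.le
  have hcard : 1 ≤ √(Fintype.card ι) :=
    Real.one_le_sqrt.2 (by exact_mod_cast Fintype.card_pos_iff.2 ⟨i₀⟩)
  have hf₀ : f i₀ ≤ β + 4 * (√(Fintype.card ι) * ‖z - u i₀‖) := by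
    refine le_add_four_mul_of_mul_sub_min_le (hf.2 i₀) hβ hL (norm_nonneg _)
      (le_mul_of_one_le_left (norm_nonneg _) hcard) ?_ hoff hexcess
    rw [real_inner_comm, inner_eq_one_sub_norm_sub_sq_div_two hz (hu.1 i₀)]
  dsimp only
  rw [real_inner_comm _ (u i₀), inner_add_sum_smul_orthonormal hu]
  exact ⟨le_add_of_nonneg_right (mul_nonneg hL.le (hf.1 i₀)),
    add_le_add_right (mul_le_mul_of_nonneg_left hf₀ hL.le) _⟩

end InnerProductSpace

theorem cut_lemma_left_general
    (D d : ℕ) (L : ℝ) (hL : 0 < L)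
    (w : EuclideanSpace ℝ (Fin D)) (v : Fin d → EuclideanSpace ℝ (Fin D))
    (horth : ∀ i j, i ≠ j → ⟪v i, v j⟫ = 0)
    (hlen : ∀ i, ‖v i‖ = L) (hd : 0 < d)
    (HC : Set (EuclideanSpace ℝ (Fin D)))
    (hHC : HC = {p | ∃ f : Fin d → ℝ, (∀ i, f i ∈ Set.Icc (0:ℝ) 1) ∧
      p = w + ∑ i, f i • v i})
    (e : EuclideanSpace ℝ (Fin D)) (he : e = (1 / L) • v ⟨0, hd⟩)
    (z : EuclideanSpace ℝ (Fin D)) (hz : ‖z‖ = 1)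
    (θ : ℝ) (hθ0 : 0 < θ) (hθ1 : θ < Real.pi / 2)
    (hangle : Real.cos θ ≤ ⟪z, e⟫)
    (β : ℝ) (hβ0 : 0 < β)
    (m M : ℝ)
    (hm : m = sInf ((fun y => ⟪y, z⟫) '' HC))
    (hM : M = sSup ((fun y => ⟪y, z⟫) '' HC))
    (HCl : Set (EuclideanSpace ℝ (Fin D)))
    (hHCl : HCl = {y ∈ HC | ⟪z, y⟫ ≤ m + β * (M - m)})
    (ε : ℝ) (hε : ε = 8 * Real.sin (θ / 2) * Real.sqrt d) :
    sSup ((fun y => ⟪e, y⟫) '' HCl) - sInf ((fun y => ⟪e, y⟫) '' HCl)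
      ≤ L * (β + ε) := by
  obtain ⟨u, hu, rfl⟩ := exists_orthonormal_of_orthogonal_of_norm_eq hL horth hlen
  obtain rfl : e = u ⟨0, hd⟩ := by rw [he, smul_smul, one_div_mul_cancel hL.ne', one_smul]
  obtain rfl : HC = cube w fun i => L • u i := by
    rw [hHC, cube]; ext p; simp [eq_comm, Set.mem_Icc, Pi.le_def, forall_and]
  subst hm hM hHCl
  refine csSup_image_sub_csInf_image_le (lowerCut_cube_nonempty w _ z hβ0.le)
    (a := ⟪w, u ⟨0, hd⟩⟫) fun y hy => ?_
  have hy := inner_mem_Icc_of_mem_lowerCut_cube hu hL w hz hβ0.le ⟨0, hd⟩ hy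
  have hsin := norm_sub_le_two_mul_sin_half hz (hu.1 _) hθ0.le (by linarith [Real.pi_pos]) hangle
  rw [Fintype.card_fin] at hy
  refine ⟨hy.1, hy.2.trans ?_⟩
  gcongr
  calc 4 * (√d * ‖z - u ⟨0, hd⟩‖) ≤ 4 * (√d * (2 * Real.sin (θ / 2))) := by gcongr
    _ = ε := by rw [hε]; ring

theorem cut_lemma_left
    (D d : ℕ) (L : ℝ) (hL : 0 < L)
    (w : EuclideanSpace ℝ (Fin D)) (v : Fin d → EuclideanSpace ℝ (Fin D))
    (horth : ∀ i j, i ≠ j → ⟪v i, v j⟫ = 0)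
    (hlen : ∀ i, ‖v i‖ = L) (hd : 0 < d)
    (HC : Set (EuclideanSpace ℝ (Fin D)))
    (hHC : HC = {p | ∃ f : Fin d → ℝ, (∀ i, f i ∈ Set.Icc (0:ℝ) 1) ∧
      p = w + ∑ i, f i • v i})
    (e : EuclideanSpace ℝ (Fin D)) (he : e = (1 / L) • v ⟨0, hd⟩)
    (z : EuclideanSpace ℝ (Fin D)) (hz : ‖z‖ = 1)
    (θ : ℝ) (hθ0 : 0 < θ) (hθ1 : θ < Real.pi / 2)
    (hangle : Real.cos θ ≤ ⟪z, e⟫)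
    (β : ℝ) (hβ0 : 0 < β) (hβ1 : β < 1)
    (m M : ℝ)
    (hm : m = sInf ((fun y => ⟪y, z⟫) '' HC))
    (hM : M = sSup ((fun y => ⟪y, z⟫) '' HC))
    (HCl : Set (EuclideanSpace ℝ (Fin D)))
    (hHCl : HCl = {y ∈ HC | ⟪z, y⟫ ≤ m + β * (M - m)})
    (ε : ℝ) (hε : ε = 8 * Real.sin (θ / 2) * Real.sqrt d) :
    sSup ((fun y => ⟪e, y⟫) '' HCl) - sInf ((fun y => ⟪e, y⟫) '' HCl)
      ≤ L * (β + ε) :=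
  cut_lemma_left_general D d L hL w v horth hlen hd HC hHC e he z hz θ hθ0 hθ1 hangle β hβ0 m M hm
    hM HCl hHCl ε hε
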